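/- Let φ : [0,∞) → (0,1] be continuous, monotonically decreasing to zero, with sub-exponential decay (log(φ(n))/n → 0 as n → ∞). Then the point o = (0,0), which lies in the closure of the spiral C_φ, satisfies the subsequence selection property (S̃SP): there exists a regular sequence of radii (r_n) decreasing to zero such that for every asymptotic direction u ∈ D(C_φ) there is a sequence (a_n) ⊆ C_φ with r_{n+1} ≤ ‖a_n‖ ≤ r_n for all n large enough and a_n/‖a_n‖ → u. In fact this holds with the winding radii r_n = φ(2π(n−1)). -/

import Mathlib

open Filter

noncomputable section

/-- The point `(x, y)` in the Euclidean plane. -/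
def V2 (x y : ℝ) : EuclideanSpace ℝ (Fin 2) := (WithLp.equiv 2 (Fin 2 → ℝ)).symm ![x, y]

/-- The spiral `C_φ = {φ(t)(cos t, sin t) : t ≥ 0} ∪ {0}`. -/
def spiral (φ : ℝ → ℝ) : Set (EuclideanSpace ℝ (Fin 2)) :=
  {p | ∃ t : ℝ, 0 ≤ t ∧ p = φ t • V2 (Real.cos t) (Real.sin t)} ∪ {0}

/-- `h` is bi-Lipschitz with constant `L`. -/
def BiLip {d : ℕ} (L : ℝ) (h : EuclideanSpace ℝ (Fin d) → EuclideanSpace ℝ (Fin d)) : Prop :=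
  ∀ x y, (1 / L) * ‖x - y‖ ≤ ‖h x - h y‖ ∧ ‖h x - h y‖ ≤ L * ‖x - y‖

/-- The set of asymptotic directions of `A` at `o`. -/
def asymDirs {d : ℕ} (A : Set (EuclideanSpace ℝ (Fin d))) (o : EuclideanSpace ℝ (Fin d)) :
    Set (EuclideanSpace ℝ (Fin d)) :=
  {u | ‖u‖ = 1 ∧ ∃ a : ℕ → EuclideanSpace ℝ (Fin d), (∀ n, a n ∈ A) ∧ (∀ n, a n ≠ o) ∧
    Tendsto a atTop (nhds o) ∧
    Tendsto (fun n => ‖a n - o‖⁻¹ • (a n - o)) atTop (nhds u)}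

/-- The cone at `o` over the set of asymptotic directions of `A` at `o`. -/
def cone {d : ℕ} (A : Set (EuclideanSpace ℝ (Fin d))) (o : EuclideanSpace ℝ (Fin d)) :
    Set (EuclideanSpace ℝ (Fin d)) :=
  {x | ∃ t : ℝ, 0 ≤ t ∧ ∃ u ∈ asymDirs A o, x = t • u}

lemma norm_V2 (x y : ℝ) : ‖V2 x y‖ = Real.sqrt (x^2 + y^2) := by
  rw [EuclideanSpace.norm_eq]
  simp [V2, Fin.sum_univ_two, WithLp.equiv_symm_apply, PiLp.toLp_apply, sq_abs]

lemma norm_V2_cos_sin (t : ℝ) : ‖V2 (Real.cos t) (Real.sin t)‖ = 1 := by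
  rw [norm_V2, Real.cos_sq_add_sin_sq, Real.sqrt_one]

lemma unit_angle (u : EuclideanSpace ℝ (Fin 2)) (hu : ‖u‖ = 1) :
    ∃ θ : ℝ, 0 ≤ θ ∧ θ ≤ 2 * Real.pi ∧ Real.cos θ = u 0 ∧ Real.sin θ = u 1 := by
  set z : ℂ := ⟨u 0, u 1⟩ with hz
  have habs : ‖z‖ = 1 := by
    have : u = V2 (u 0) (u 1) := by ext i; fin_cases i <;> rfl
    rw [this, norm_V2] at hu
    rw [Complex.norm_def, Complex.normSq_mk]
    simpa [pow_two] using hu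
  have hz0 : z ≠ 0 := by
    intro h; rw [h] at habs; simp at habs
  have hc : Real.cos z.arg = u 0 := by
    rw [Complex.cos_arg hz0, habs]; simp [hz]
  have hs : Real.sin z.arg = u 1 := by
    rw [Complex.sin_arg, habs]; simp [hz]
  rcases le_or_gt 0 z.arg with h | h
  · exact ⟨z.arg, h, le_trans (Complex.arg_le_pi z) (by nlinarith [Real.pi_pos]), hc, hs⟩
  · refine ⟨z.arg + 2 * Real.pi, ?_, ?_, ?_, ?_⟩
    · nlinarith [Complex.neg_pi_lt_arg z, Real.pi_pos]
    · nlinarith [Complex.arg_le_pi z, Real.pi_pos]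
    · rw [Real.cos_add_two_pi, hc]
    · rw [Real.sin_add_two_pi, hs]

/-- Key regularity lemma: a positive antitone sequence whose log decays sub-linearly has
ratios arbitrarily close to 1 arbitrarily far out. -/
lemma ratio_close (r : ℕ → ℝ) (rpos : ∀ n, 0 < r n)
    (hanti : ∀ n m : ℕ, n ≤ m → r m ≤ r n)
    (hA : Tendsto (fun n : ℕ => Real.log (r n) / n) atTop (nhds 0))
    (c : ℝ) (hc0 : 0 < c) (hc1 : c < 1) (N : ℕ) :
    ∃ n, N ≤ n ∧ c < r (n + 1) / r n := by
  by_contra h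
  push_neg at h
  have hstep : ∀ n, N ≤ n → r (n + 1) ≤ c * r n := by
    intro n hn
    have := h n hn
    rwa [div_le_iff₀ (rpos n)] at this
  have hiter : ∀ k : ℕ, r (N + k) ≤ c ^ k * r N := by
    intro k
    induction k with
    | zero => simp
    | succ k ih =>
      have h1 : r (N + k + 1) ≤ c * r (N + k) := hstep _ (Nat.le_add_right _ _)
      calc r (N + (k + 1)) = r (N + k + 1) := by ring_nf
        _ ≤ c * r (N + k) := h1
        _ ≤ c * (c ^ k * r N) := by
            exact mul_le_mul_of_nonneg_left ih hc0.le
        _ = c ^ (k + 1) * r N := by ring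
  have hlog : ∀ k : ℕ, Real.log (r (N + k)) ≤ k * Real.log c + Real.log (r N) := by
    intro k
    have := Real.log_le_log (rpos (N + k)) (hiter k)
    rwa [Real.log_mul (by positivity) (rpos N).ne', Real.log_pow] at this
  set ε : ℝ := -Real.log c with hε
  have hεpos : 0 < ε := by
    have := Real.log_neg hc0 hc1
    simp [hε]; linarith
  have hM : ∀ᶠ n : ℕ in atTop, -(ε / 2) < Real.log (r n) / n := by
    have := hA.eventually (eventually_gt_nhds (show -(ε/2) < 0 by linarith))
    exact this
  obtain ⟨M, hM⟩ := hM.exists_forall_of_atTop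
  -- choose k large
  obtain ⟨k0, hk0⟩ := exists_nat_gt ((Real.log (r N) + ε / 2 * N) / (ε / 2))
  set k := k0 + M + 1 with hk
  have hn1 : (1 : ℕ) ≤ N + k := by omega
  have h1 : -(ε / 2) < Real.log (r (N + k)) / ((N + k : ℕ) : ℝ) := hM (N + k) (by omega)
  have hNk : (0 : ℝ) < (N + k : ℕ) := by exact_mod_cast Nat.lt_of_lt_of_le Nat.zero_lt_one hn1
  have h2 : -(ε / 2) * ((N + k : ℕ) : ℝ) < Real.log (r (N + k)) := by
    rw [← lt_div_iff₀ hNk]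
    exact h1
  have h3 := hlog k
  have hkcast : ((N + k : ℕ) : ℝ) = (N : ℝ) + k := by push_cast; ring
  have hkk : ((k0 : ℝ)) ≤ (k : ℝ) - 1 := by
    have : (k : ℝ) = (k0 : ℝ) + M + 1 := by rw [hk]; push_cast; ring
    rw [this]; have : (0:ℝ) ≤ M := Nat.cast_nonneg M; linarith
  have hkbig : (Real.log (r N) + ε / 2 * N) < ε / 2 * k := by
    have h5 : (Real.log (r N) + ε / 2 * N) < ε / 2 * k0 := by
      rw [div_lt_iff₀ (by linarith : (0:ℝ) < ε / 2)] at hk0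
      linarith
    have : ε / 2 * (k0:ℝ) ≤ ε / 2 * k := by
      have : (k0 : ℝ) ≤ k := by linarith
      nlinarith
    linarith
  rw [hkcast] at h2
  have hlogc : Real.log c = -ε := by simp [hε]
  rw [hlogc] at h3
  nlinarith

/-- For `φ` decreasing to zero sub-exponentially, the origin (which lies in the closure of the
spiral `C_φ`) satisfies the subsequence selection property, witnessed by the winding radii
`r n = φ (2π n)` (i.e. `r_n = φ(2π(n-1))` with 1-based indexing): the radii are positive,
decreasing to zero, regular, and every asymptotic direction of `C_φ` at `0` is approached by
points of `C_φ` between consecutive winding radii. -/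
theorem spiral_satisfies_SSPt (φ : ℝ → ℝ) (hcont : ContinuousOn φ (Set.Ici 0))
    (hpos : ∀ t ∈ Set.Ici (0 : ℝ), 0 < φ t) (hle : ∀ t ∈ Set.Ici (0 : ℝ), φ t ≤ 1)
    (hanti : AntitoneOn φ (Set.Ici 0)) (hlim : Tendsto φ atTop (nhds 0))
    (hsub : Tendsto (fun n : ℕ => Real.log (φ n) / n) atTop (nhds 0)) :
    (0 : EuclideanSpace ℝ (Fin 2)) ∈ closure (spiral φ) ∧
    (∀ n : ℕ, 0 < φ (2 * Real.pi * n)) ∧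
    Antitone (fun n : ℕ => φ (2 * Real.pi * n)) ∧
    Tendsto (fun n : ℕ => φ (2 * Real.pi * n)) atTop (nhds 0) ∧
    (∃ nk : ℕ → ℕ, StrictMono nk ∧
      Tendsto (fun k => φ (2 * Real.pi * (nk k + 1)) / φ (2 * Real.pi * nk k))
        atTop (nhds 1)) ∧
    ∀ u ∈ asymDirs (spiral φ) 0, ∃ a : ℕ → EuclideanSpace ℝ (Fin 2),
      (∀ n, a n ∈ spiral φ) ∧
      (∀ᶠ (n : ℕ) in atTop, φ (2 * Real.pi * ((n : ℝ) + 1)) ≤ ‖a n‖ ∧ ‖a n‖ ≤ φ (2 * Real.pi * (n : ℝ))) ∧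
      Tendsto (fun n => ‖a n‖⁻¹ • a n) atTop (nhds u) := by
  have pi_pos := Real.pi_pos
  have harg : ∀ x : ℝ, 0 ≤ x → (0:ℝ) ≤ 2 * Real.pi * x := fun x hx => by positivity
  set r : ℕ → ℝ := fun n => φ (2 * Real.pi * n) with hrdef
  have rpos : ∀ n, 0 < r n := fun n => hpos _ (Set.mem_Ici.2 (harg n (Nat.cast_nonneg n)))
  have ranti : ∀ n m : ℕ, n ≤ m → r m ≤ r n := by
    intro n m h
    apply hanti (Set.mem_Ici.2 (harg n (Nat.cast_nonneg n)))
      (Set.mem_Ici.2 (harg m (Nat.cast_nonneg m)))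
    have : (n:ℝ) ≤ m := Nat.cast_le.2 h
    nlinarith
  refine ⟨subset_closure (Or.inr rfl), rpos, fun n m h => ranti n m h, ?_, ?_, ?_⟩
  · -- tendsto 0
    apply hlim.comp
    apply Tendsto.const_mul_atTop (by positivity : (0:ℝ) < 2 * Real.pi)
    exact tendsto_natCast_atTop_atTop
  · -- regularity
    have hA : Tendsto (fun n : ℕ => Real.log (r n) / n) atTop (nhds 0) := by
      have h6 : (6:ℝ) ≤ 2 * Real.pi := by nlinarith [Real.pi_gt_three]
      have h7 : 2 * Real.pi ≤ 7 := by nlinarith [Real.pi_lt_d2]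
      have hlow : ∀ n : ℕ, Real.log (φ ((7*n : ℕ) : ℝ)) ≤ Real.log (r n) := by
        intro n
        apply Real.log_le_log (hpos _ (Set.mem_Ici.2 (by positivity)))
        apply hanti (Set.mem_Ici.2 (harg n (Nat.cast_nonneg n)))
          (Set.mem_Ici.2 (by positivity))
        push_cast
        nlinarith [Nat.cast_nonneg (α := ℝ) n]
      have hhigh : ∀ n : ℕ, Real.log (r n) ≤ Real.log (φ ((6*n : ℕ) : ℝ)) := by
        intro n
        apply Real.log_le_log (rpos n)
        apply hanti (Set.mem_Ici.2 (by positivity))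
          (Set.mem_Ici.2 (harg n (Nat.cast_nonneg n)))
        push_cast
        nlinarith [Nat.cast_nonneg (α := ℝ) n]
      have t7 : Tendsto (fun n : ℕ => Real.log (φ ((7*n:ℕ):ℝ)) / n) atTop (nhds 0) := by
        have comp := hsub.comp
          (tendsto_atTop_mono (fun n : ℕ => by omega : ∀ n : ℕ, n ≤ 7 * n) tendsto_id)
        have := comp.const_mul (7:ℝ)
        rw [mul_zero] at this
        apply this.congr'
        filter_upwards [eventually_ge_atTop 1] with n hn
        have hn' : (0:ℝ) < n := by exact_mod_cast hn
        show 7 * (Real.log (φ ((7*n:ℕ):ℝ)) / ((7*n:ℕ):ℝ)) = _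
        push_cast
        field_simp
      have t6 : Tendsto (fun n : ℕ => Real.log (φ ((6*n:ℕ):ℝ)) / n) atTop (nhds 0) := by
        have comp := hsub.comp
          (tendsto_atTop_mono (fun n : ℕ => by omega : ∀ n : ℕ, n ≤ 6 * n) tendsto_id)
        have := comp.const_mul (6:ℝ)
        rw [mul_zero] at this
        apply this.congr'
        filter_upwards [eventually_ge_atTop 1] with n hn
        have hn' : (0:ℝ) < n := by exact_mod_cast hn
        show 6 * (Real.log (φ ((6*n:ℕ):ℝ)) / ((6*n:ℕ):ℝ)) = _
        push_cast
        field_simp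
      apply tendsto_of_tendsto_of_tendsto_of_le_of_le' t7 t6
      · filter_upwards [eventually_ge_atTop 1] with n hn
        have hn' : (0:ℝ) < n := by exact_mod_cast hn
        exact div_le_div_of_nonneg_right (hlow n) hn'.le
      · filter_upwards [eventually_ge_atTop 1] with n hn
        have hn' : (0:ℝ) < n := by exact_mod_cast hn
        exact div_le_div_of_nonneg_right (hhigh n) hn'.le
    have key : ∀ N k : ℕ, ∃ n, N ≤ n ∧ 1 - 1/((k:ℝ)+2) < r (n+1) / r n := by
      intro N k
      apply ratio_close r rpos ranti hA
      · have h1 : 1/((k:ℝ)+2) ≤ 1/2 := by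
          apply div_le_div_of_nonneg_left one_pos.le (by norm_num)
          have : (0:ℝ) ≤ k := Nat.cast_nonneg k
          linarith
        linarith
      · have : (0:ℝ) < 1/((k:ℝ)+2) := by positivity
        linarith
    choose g hg1 hg2 using key
    refine ⟨fun k => Nat.rec (g 0 0) (fun k ih => g (ih + 1) (k+1)) k, ?_, ?_⟩
    · apply strictMono_nat_of_lt_succ
      intro k
      exact Nat.lt_of_lt_of_le (Nat.lt_succ_self _) (hg1 _ (k+1))
    · set nk : ℕ → ℕ := fun k => Nat.rec (g 0 0) (fun k ih => g (ih + 1) (k+1)) k with hnk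
      have hrat : ∀ k : ℕ, 1 - 1/((k:ℝ)+2) < r (nk k + 1) / r (nk k) := by
        intro k
        cases k with
        | zero => exact hg2 0 0
        | succ k => exact hg2 _ (k+1)
      have hle1 : ∀ k, r (nk k + 1) / r (nk k) ≤ 1 :=
        fun k => div_le_one_of_le₀ (ranti _ _ (Nat.le_succ _)) (rpos _).le
      have hlow : Tendsto (fun k : ℕ => 1 - 1/((k:ℝ)+2)) atTop (nhds 1) := by
        have h1 : Tendsto (fun k : ℕ => ((k:ℝ)+2)) atTop atTop :=
          tendsto_atTop_add_const_right _ 2 tendsto_natCast_atTop_atTop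
        have h2 := h1.inv_tendsto_atTop
        have := (tendsto_const_nhds (x := (1:ℝ)) (f := atTop)).sub h2
        rw [sub_zero] at this
        exact this.congr (fun k => by simp [one_div])
      have hsq : Tendsto (fun k => r (nk k + 1) / r (nk k)) atTop (nhds 1) := by
        apply tendsto_of_tendsto_of_tendsto_of_le_of_le' hlow tendsto_const_nhds
        · filter_upwards with k; exact (hrat k).le
        · filter_upwards with k; exact hle1 k
      apply hsq.congr
      intro k
      show r (nk k + 1) / r (nk k) = _
      rw [hrdef]
      push_cast
      ring_nf
  · -- directions
    rintro u ⟨hu1, -⟩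
    obtain ⟨θ, hθ0, hθ2π, hcos, hsin⟩ := unit_angle u hu1
    have hueq : V2 (Real.cos θ) (Real.sin θ) = u := by
      rw [hcos, hsin]; ext i; fin_cases i <;> rfl
    set t : ℕ → ℝ := fun n => θ + n * (2 * Real.pi) with ht
    have ht0 : ∀ n : ℕ, 0 ≤ t n := fun n => add_nonneg hθ0 (by positivity)
    refine ⟨fun n => φ (t n) • V2 (Real.cos (t n)) (Real.sin (t n)),
      fun n => Or.inl ⟨t n, ht0 n, rfl⟩, ?_, ?_⟩
    · filter_upwards with n
      rw [norm_smul, norm_V2_cos_sin, mul_one, Real.norm_eq_abs,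
        abs_of_pos (hpos _ (Set.mem_Ici.2 (ht0 n)))]
      constructor
      · apply hanti (Set.mem_Ici.2 (ht0 n)) (Set.mem_Ici.2 (harg _ (by positivity)))
        show θ + n * (2 * Real.pi) ≤ 2 * Real.pi * ((n:ℝ)+1)
        nlinarith
      · apply hanti (Set.mem_Ici.2 (harg _ (Nat.cast_nonneg n))) (Set.mem_Ici.2 (ht0 n))
        show 2 * Real.pi * (n:ℝ) ≤ θ + n * (2 * Real.pi)
        nlinarith
    · apply tendsto_const_nhds.congr
      intro n
      have hVu : V2 (Real.cos (t n)) (Real.sin (t n)) = u := by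
        rw [← hueq, ht]
        simp only
        rw [Real.cos_add_nat_mul_two_pi, Real.sin_add_nat_mul_two_pi]
      have hp := hpos _ (Set.mem_Ici.2 (ht0 n))
      show u = ‖φ (t n) • V2 (Real.cos (t n)) (Real.sin (t n))‖⁻¹ •
        (φ (t n) • V2 (Real.cos (t n)) (Real.sin (t n)))
      rw [norm_smul, norm_V2_cos_sin, mul_one, Real.norm_eq_abs, abs_of_pos hp, hVu,
        smul_smul, inv_mul_cancel₀ hp.ne', one_smul]
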